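/- Let W ∈ D_0(N,k) and let W = Σ_{a=1}^{k} W_a be its decomposition into the commuting factors g_a (block components along residue classes mod k). If W evolves by the quantized Euler equations Ẇ = [Δ_N^{-1}W, W]_N, then each factor satisfies Ẇ_a = [Δ_N^{-1}W, W_a]_N; consequently each W_a evolves isospectrally, so all eigenvalues of each W_a (equivalently, traces Tr(W_a^p) for all p) are conserved, giving N - 1 independent conserved Casimirs in total (after fixing total trace zero). -/

import Mathlib

open Matrix

attribute [local instance] Matrix.normedAddCommGroup Matrix.normedSpace
attribute [local instance] LieRing.ofAssociativeRing

lemma banded_mul {N k : ℕ} {A B : Matrix (Fin N) (Fin N) ℂ}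
    (hA : ∀ i j : Fin N, ¬ ((k : ℤ) ∣ ((i : ℤ) - (j : ℤ))) → A i j = 0)
    (hB : ∀ i j : Fin N, ¬ ((k : ℤ) ∣ ((i : ℤ) - (j : ℤ))) → B i j = 0) :
    ∀ i j : Fin N, ¬ ((k : ℤ) ∣ ((i : ℤ) - (j : ℤ))) → (A * B) i j = 0 := by
  intro i j h
  rw [Matrix.mul_apply]
  apply Finset.sum_eq_zero
  intro x _
  by_cases h1 : (k : ℤ) ∣ ((i : ℤ) - (x : ℤ))
  · by_cases h2 : (k : ℤ) ∣ ((x : ℤ) - (j : ℤ))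
    · exact absurd (by have := dvd_add h1 h2; simpa using this) h
    · rw [hB x j h2, mul_zero]
  · rw [hA i x h1, zero_mul]

/-- `D₀(N,k) = D(N,k) ∩ su(N)`: traceless skew-Hermitian matrices supported on
diagonals at multiples of `k`, as a real Lie subalgebra. -/
def D0Sub (N k : ℕ) : LieSubalgebra ℝ (Matrix (Fin N) (Fin N) ℂ) where
  carrier := {A | Aᴴ = -A ∧ A.trace = 0 ∧
      ∀ i j : Fin N, ¬ ((k : ℤ) ∣ ((i : ℤ) - (j : ℤ))) → A i j = 0}
  add_mem' := by
    intro A B hA hB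
    refine ⟨?_, ?_, ?_⟩
    · simp only [Matrix.conjTranspose_add, hA.1, hB.1]; abel
    · simp [Matrix.trace_add, hA.2.1, hB.2.1]
    · intro i j h
      simp [Matrix.add_apply, hA.2.2 i j h, hB.2.2 i j h]
  zero_mem' := ⟨by simp, by simp, fun i j _ => rfl⟩
  smul_mem' := by
    intro c A hA
    refine ⟨by simp [Matrix.conjTranspose_smul, hA.1], ?_, fun i j h => ?_⟩
    · rw [Matrix.trace_smul, hA.2.1, smul_zero]
    · simp [Matrix.smul_apply, hA.2.2 i j h]
  lie_mem' := by
    intro A B hA hB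
    refine ⟨?_, ?_, ?_⟩
    · simp only [Ring.lie_def, Matrix.conjTranspose_sub, Matrix.conjTranspose_mul, hA.1, hB.1]
      noncomm_ring
    · simp only [Ring.lie_def, Matrix.trace_sub, Matrix.trace_mul_comm A B, sub_self]
    · intro i j h
      simp only [Ring.lie_def, Matrix.sub_apply]
      rw [banded_mul hA.2.2 hB.2.2 i j h, banded_mul hB.2.2 hA.2.2 i j h, sub_zero]

/-- The projection `Π_a` of a matrix onto the block `g_a` supported on rows and columns
congruent to `a` mod `k` (rows/columns numbered `1, …, N`). -/
def projBlock (N k a : ℕ) (A : Matrix (Fin N) (Fin N) ℂ) : Matrix (Fin N) (Fin N) ℂ :=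
  Matrix.of fun i j =>
    if ((i : ℕ) + 1) % k = a % k ∧ ((j : ℕ) + 1) % k = a % k then A i j else 0

/-!
Write `Π_a A = E_a A E_a` with `E_a` the diagonal idempotent of the residue class `a`. A matrix
supported on the diagonals at multiples of `k`, such as `Δ⁻¹W`, commutes with `E_a`, so `Π_a`
commutes with the bracket against it, which gives the factor equation. For a Lax equation
`Ẋ = [Q, X]` the Leibniz rule gives `(X^p)˙ = [Q, X^p]`, which is traceless.
-/

-- Otherwise `HasDerivAt` on a normed ring takes its additive group from the Lie ring structure.
attribute [-instance] LieRing.ofAssociativeRing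

theorem HasDerivAt.pow_of_lax {𝕜 𝔸 : Type*} [NontriviallyNormedField 𝕜] [NormedRing 𝔸]
    [NormedAlgebra 𝕜 𝔸] {A : 𝕜 → 𝔸} {Q : 𝔸} {t : 𝕜}
    (hA : HasDerivAt A (Q * A t - A t * Q) t) (p : ℕ) :
    HasDerivAt (fun s => A s ^ p) (Q * A t ^ p - A t ^ p * Q) t := by
  induction p with
  | zero => simpa using hasDerivAt_const t (1 : 𝔸)
  | succ p ih =>
    simp only [pow_succ]
    convert ih.fun_mul hA using 1
    noncomm_ring

theorem Matrix.trace_pow_eq_of_lax {n α : Type*} [Fintype n] [DecidableEq n] [NormedCommRing α]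
    [NormedAlgebra ℝ α] {A Q : ℝ → Matrix n n α}
    (hA : ∀ t, HasDerivAt A (Q t * A t - A t * Q t) t) (p : ℕ) (s t : ℝ) :
    (A s ^ p).trace = (A t ^ p).trace := by
  -- The operator norm makes matrices a normed ring whose topology is the product topology.
  let _ := Matrix.linftyOpNormedRing (n := n) (α := α)
  let _ := Matrix.linftyOpNormedAlgebra (n := n) (α := α) (R := ℝ)
  let tr : Matrix n n α →L[ℝ] α := ⟨traceLinearMap n ℝ α, continuous_id.matrix_trace⟩
  have hconst : ∀ t, HasDerivAt (fun s => (A s ^ p).trace) 0 t := fun t => by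
    refine (tr.hasFDerivAt.comp_hasDerivAt t ((hA t).pow_of_lax p)).congr_deriv ?_
    change trace _ = 0
    rw [trace_sub, trace_mul_comm, sub_self]
  exact is_const_of_deriv_eq_zero (fun t => (hconst t).differentiableAt)
    (fun t => (hconst t).deriv) s t

def blockIndicator (N k a : ℕ) : Matrix (Fin N) (Fin N) ℂ :=
  diagonal fun i => if ((i : ℕ) + 1) % k = a % k then 1 else 0

theorem projBlock_eq_mul (N k a : ℕ) (A : Matrix (Fin N) (Fin N) ℂ) :
    projBlock N k a A = blockIndicator N k a * A * blockIndicator N k a := by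
  ext i j
  simp only [projBlock, blockIndicator, of_apply, diagonal_mul, mul_diagonal]
  split_ifs <;> simp_all

theorem commute_blockIndicator_of_banded {N k : ℕ} (a : ℕ) {P : Matrix (Fin N) (Fin N) ℂ}
    (hP : ∀ i j : Fin N, ¬ ((k : ℤ) ∣ ((i : ℤ) - (j : ℤ))) → P i j = 0) :
    Commute (blockIndicator N k a) P := by
  ext i j
  simp only [blockIndicator, diagonal_mul, mul_diagonal]
  by_cases hij : (k : ℤ) ∣ (i : ℤ) - (j : ℤ)
  · have hmod : ((j : ℕ) + 1) % k = ((i : ℕ) + 1) % k :=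
      (Nat.modEq_iff_dvd.2 hij).add_right 1
    rw [hmod, mul_comm]
  · simp [hP i j hij]

theorem projBlock_commutator_of_banded {N k : ℕ} (a : ℕ) {P : Matrix (Fin N) (Fin N) ℂ}
    (hP : ∀ i j : Fin N, ¬ ((k : ℤ) ∣ ((i : ℤ) - (j : ℤ))) → P i j = 0)
    (X : Matrix (Fin N) (Fin N) ℂ) :
    projBlock N k a (P * X - X * P) = P * projBlock N k a X - projBlock N k a X * P := by
  have hD := (commute_blockIndicator_of_banded a hP).eq
  simp only [projBlock_eq_mul, mul_sub, sub_mul]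
  congr 1
  · rw [← mul_assoc _ P, hD]
    simp only [mul_assoc]
  · rw [mul_assoc, mul_assoc, ← hD]
    simp only [mul_assoc]

theorem projBlock_smul (N k a : ℕ) (c : ℝ) (A : Matrix (Fin N) (Fin N) ℂ) :
    projBlock N k a (c • A) = c • projBlock N k a A := by
  simp only [projBlock_eq_mul, mul_smul_comm, smul_mul_assoc]

theorem hasDerivAt_projBlock {N : ℕ} (k a : ℕ) {W : ℝ → Matrix (Fin N) (Fin N) ℂ}
    {W' : Matrix (Fin N) (Fin N) ℂ} {t : ℝ} (hW : HasDerivAt W W' t) :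
    HasDerivAt (fun s => projBlock N k a (W s)) (projBlock N k a W') t := by
  let _ := Matrix.linftyOpNormedRing (n := Fin N) (α := ℂ)
  let _ := Matrix.linftyOpNormedAlgebra (n := Fin N) (α := ℂ) (R := ℝ)
  simp only [projBlock_eq_mul]
  exact (hW.const_mul _).mul_const _

theorem HasDerivAt.projBlock_of_banded {N k : ℕ} (a : ℕ) {W : ℝ → Matrix (Fin N) (Fin N) ℂ}
    {P : Matrix (Fin N) (Fin N) ℂ} {c t : ℝ}
    (hP : ∀ i j : Fin N, ¬ ((k : ℤ) ∣ ((i : ℤ) - (j : ℤ))) → P i j = 0)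
    (hW : HasDerivAt W (c • (P * W t - W t * P)) t) :
    HasDerivAt (fun s => projBlock N k a (W s))
      (c • (P * projBlock N k a (W t) - projBlock N k a (W t) * P)) t := by
  rw [← projBlock_commutator_of_banded a hP, ← projBlock_smul]
  exact hasDerivAt_projBlock k a hW

theorem factor_dynamics_general (N k : ℕ)
    (Δinv : Matrix (Fin N) (Fin N) ℂ →ₗ[ℝ] Matrix (Fin N) (Fin N) ℂ)
    (hΔ : ∀ A ∈ D0Sub N k, Δinv A ∈ D0Sub N k)
    (W : ℝ → Matrix (Fin N) (Fin N) ℂ)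
    (hmem : ∀ t : ℝ, W t ∈ D0Sub N k)
    (hW : ∀ t : ℝ, HasDerivAt W
      (((N : ℝ) ^ ((3 : ℝ) / 2)) • (Δinv (W t) * W t - W t * Δinv (W t))) t) :
    (∀ a : Fin k, ∀ t : ℝ, HasDerivAt (fun s : ℝ => projBlock N k ((a : ℕ) + 1) (W s))
      (((N : ℝ) ^ ((3 : ℝ) / 2)) •
        (Δinv (W t) * projBlock N k ((a : ℕ) + 1) (W t) -
          projBlock N k ((a : ℕ) + 1) (W t) * Δinv (W t))) t) ∧
    (∀ a : Fin k, ∀ p : ℕ, ∀ t : ℝ,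
      ((projBlock N k ((a : ℕ) + 1) (W t)) ^ p).trace =
        ((projBlock N k ((a : ℕ) + 1) (W 0)) ^ p).trace) := by
  have hfactor (a : Fin k) (t : ℝ) :=
    (hW t).projBlock_of_banded ((a : ℕ) + 1) (hΔ _ (hmem t)).2.2
  refine ⟨hfactor, fun a p t => Matrix.trace_pow_eq_of_lax
    (A := fun s => projBlock N k ((a : ℕ) + 1) (W s))
    (Q := fun s => ((N : ℝ) ^ ((3 : ℝ) / 2)) • Δinv (W s)) (fun s => ?_) p t 0⟩
  simpa only [smul_sub, smul_mul_assoc, mul_smul_comm] using hfactor a s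

/-- Factor dynamics and its Casimirs (equations (13) of the paper). Let
`W : ℝ → D₀(N,k)` solve the quantized Euler equations `Ẇ = [Δ_N⁻¹W, W]_N` and let
`W_a = Π_a W` be its components along the commuting factors `g_a`. Then each factor
satisfies `Ẇ_a = [Δ_N⁻¹W, W_a]_N`; consequently each `W_a` evolves isospectrally, so
all traces `Tr(W_a^p)` (equivalently, all eigenvalues of each `W_a`) are conserved,
giving the `N - 1` conserved Casimirs. -/
theorem factor_dynamics (N k : ℕ) (hN : 1 ≤ N) (hk : 1 ≤ k) (hkN : k ≤ N)
    (Δinv : Matrix (Fin N) (Fin N) ℂ →ₗ[ℝ] Matrix (Fin N) (Fin N) ℂ)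
    (hΔ : ∀ A ∈ D0Sub N k, Δinv A ∈ D0Sub N k)
    (W : ℝ → Matrix (Fin N) (Fin N) ℂ)
    (hmem : ∀ t : ℝ, W t ∈ D0Sub N k)
    (hW : ∀ t : ℝ, HasDerivAt W
      (((N : ℝ) ^ ((3 : ℝ) / 2)) • (Δinv (W t) * W t - W t * Δinv (W t))) t) :
    (∀ a : Fin k, ∀ t : ℝ, HasDerivAt (fun s : ℝ => projBlock N k ((a : ℕ) + 1) (W s))
      (((N : ℝ) ^ ((3 : ℝ) / 2)) •
        (Δinv (W t) * projBlock N k ((a : ℕ) + 1) (W t) -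
          projBlock N k ((a : ℕ) + 1) (W t) * Δinv (W t))) t) ∧
    (∀ a : Fin k, ∀ p : ℕ, ∀ t : ℝ,
      ((projBlock N k ((a : ℕ) + 1) (W t)) ^ p).trace =
        ((projBlock N k ((a : ℕ) + 1) (W 0)) ^ p).trace) :=
  factor_dynamics_general N k Δinv hΔ W hmem hW
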